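/- Existence of a minimal estimate: for every IoT-LySa system of nodes N, the set of CFA estimates (Σ̂, κ, Θ, α) satisfying (Σ̂, κ, Θ, α) ⊨ N, partially ordered componentwise by set inclusion, constitutes a Moore family (it is closed under greatest lower bounds of arbitrary subsets); consequently there exists a least (minimal) valid estimate for N. -/
import Mathlib


namespace IoTLySa

/-! ### Basic syntactic categories -/

abbrev Label := ℕ
abbrev Var := ℕ
abbrev SensorId := ℕ
abbrev ActuatorId := ℕ
abbrev Act := ℕ
abbrev Key := ℕ
abbrev FName := ℕ

/-- Abstract values of the CFA: the cut value `⊤^ℓ` (tagged secret/public),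
sensor values `i^ℓ`, node values `v^ℓ`, abstract encryptions and abstract
function applications. -/
inductive AVal : Type
  | top    : Bool → Label → AVal
  | sensor : SensorId → Label → AVal
  | val    : ℕ → Label → AVal
  | enc    : List AVal → Key → Label → AVal
  | fn     : FName → List AVal → Label → AVal

def AVal.label : AVal → Label
  | .top _ l => l
  | .sensor _ l => l
  | .val _ l => l
  | .enc _ _ l => l
  | .fn _ _ l => l

/-- The cut operator `⌊·⌋_d`, replacing subterms at depth `d` by the special
value `⊤` (classified secret or public via `cls`). -/
def AVal.cut (cls : AVal → Bool) : ℕ → AVal → AVal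
  | 0, v => .top (cls v) v.label
  | n+1, .enc vs k l => .enc (vs.map (AVal.cut cls n)) k l
  | n+1, .fn f vs l => .fn f (vs.map (AVal.cut cls n)) l
  | _+1, v => v

/-- Concrete values (free/symbolic interpretation of functions). -/
inductive CVal : Type
  | base : ℕ → CVal
  | enc  : List CVal → Key → CVal
  | fn   : FName → List CVal → CVal

/-- Instrumented values: pairs `(v, v̂)` of a concrete and an abstract value. -/
abbrev IVal := CVal × AVal

abbrev Addr := Var ⊕ SensorId

/-- Instrumented stores `Σ_ℓ^i` (with a `⊥` value, i.e. `none`). -/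
abbrev Store := Addr → Option IVal

def updStore (σ : Store) (a : Addr) (w : IVal) : Store :=
  fun b => if b = a then some w else σ b

def updVars : Store → List Var → List IVal → Store
  | σ, x :: xs, w :: ws => updVars (updStore σ (Sum.inl x) w) xs ws
  | σ, _, _ => σ

/-! ### Terms -/

inductive Expr : Type
  | val  : ℕ → Expr
  | sens : SensorId → Expr
  | var  : Var → Expr
  | enc  : List Expr → Key → Expr
  | fn   : FName → List Expr → Expr

mutual
  /-- Instrumented denotational semantics of terms. -/
  def evalE (cls : AVal → Bool) (d : ℕ) (ℓ : Label) (σ : Store) : Expr → Option IVal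
    | .val v => some (.base v, .val v ℓ)
    | .sens i => σ (Sum.inr i)
    | .var x => σ (Sum.inl x)
    | .enc es k =>
        match evalList cls d ℓ σ es with
        | some ws => some (.enc (ws.map Prod.fst) k,
                           AVal.cut cls d (.enc (ws.map Prod.snd) k ℓ))
        | none => none
    | .fn f es =>
        match evalList cls d ℓ σ es with
        | some ws => some (.fn f (ws.map Prod.fst),
                           AVal.cut cls d (.fn f (ws.map Prod.snd) ℓ))
        | none => none

  def evalList (cls : AVal → Bool) (d : ℕ) (ℓ : Label) (σ : Store) :
      List Expr → Option (List IVal)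
    | [] => some []
    | e :: es =>
        match evalE cls d ℓ σ e, evalList cls d ℓ σ es with
        | some w, some ws => some (w :: ws)
        | _, _ => none
end

/-! ### Processes, sensors, actuators -/

inductive Proc : Type
  | nil    : Proc
  | outp   : List Expr → Finset Label → Proc → Proc  -- ⟨⟨E₁,…,E_k⟩⟩ : L. P
  | outv   : List IVal → Finset Label → Proc         -- evaluated output offer
  | inp    : List Expr → List Var → Proc → Proc      -- (E₁,…,E_j; x_{j+1},…,x_k). P
  | dec    : Expr → List Expr → List Var → Key → Proc → Proc
  | cond   : Expr → Proc → Proc → Proc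
  | hvar   : Proc
  | mu     : Proc → Proc
  | assign : Var → Expr → Proc → Proc
  | act    : ActuatorId → Act → Proc → Proc          -- ⟨j,γ⟩. P

/-- Substitution of the iteration variable `h`. -/
def Proc.substH (Q : Proc) : Proc → Proc
  | .nil => .nil
  | .outp es L P => .outp es L (Proc.substH Q P)
  | .outv ws L => .outv ws L
  | .inp es xs P => .inp es xs (Proc.substH Q P)
  | .dec E es xs k P => .dec E es xs k (Proc.substH Q P)
  | .cond E P₁ P₂ => .cond E (Proc.substH Q P₁) (Proc.substH Q P₂)
  | .hvar => Q
  | .mu P => .mu P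
  | .assign x E P => .assign x E (Proc.substH Q P)
  | .act j γ P => .act j γ (Proc.substH Q P)

inductive Sensor : Type
  | nil   : Sensor
  | tau   : Sensor → Sensor
  | store : SensorId → ℕ → Sensor → Sensor  -- i := v. S
  | hvar  : Sensor
  | mu    : Sensor → Sensor

def Sensor.substH (Q : Sensor) : Sensor → Sensor
  | .nil => .nil
  | .tau S => .tau (Sensor.substH Q S)
  | .store i v S => .store i v (Sensor.substH Q S)
  | .hvar => Q
  | .mu S => .mu S

inductive Actuator : Type
  | nil  : Actuator
  | tau  : Actuator → Actuator
  | cmd  : ActuatorId → Finset Act → Actuator → Actuator  -- (|j, Γ|). A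
  | act  : Act → Actuator → Actuator                      -- γ. A
  | hvar : Actuator
  | mu   : Actuator → Actuator

def Actuator.substH (Q : Actuator) : Actuator → Actuator
  | .nil => .nil
  | .tau A => .tau (Actuator.substH Q A)
  | .cmd j Γ A => .cmd j Γ (Actuator.substH Q A)
  | .act γ A => .act γ (Actuator.substH Q A)
  | .hvar => Q
  | .mu A => .mu A

/-! ### Node components and systems of nodes -/

inductive Comp : Type
  | store    : Store → Comp
  | proc     : Proc → Comp
  | sensor   : Sensor → Comp
  | actuator : Actuator → Comp
  | par      : Comp → Comp → Comp

inductive Sys : Type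
  | nil  : Sys
  | node : Label → Comp → Sys
  | par  : Sys → Sys → Sys

/-! ### Structural congruence -/

inductive CompCong : Comp → Comp → Prop
  | refl (B) : CompCong B B
  | symm {B₁ B₂} : CompCong B₁ B₂ → CompCong B₂ B₁
  | trans {B₁ B₂ B₃} : CompCong B₁ B₂ → CompCong B₂ B₃ → CompCong B₁ B₃
  | par_congr {B₁ B₁' B₂ B₂'} : CompCong B₁ B₁' → CompCong B₂ B₂' →
      CompCong (.par B₁ B₂) (.par B₁' B₂')
  | par_comm (B₁ B₂) : CompCong (.par B₁ B₂) (.par B₂ B₁)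
  | par_assoc (B₁ B₂ B₃) : CompCong (.par (.par B₁ B₂) B₃) (.par B₁ (.par B₂ B₃))
  | par_nil (B) : CompCong (.par B (.proc .nil)) B
  | unfoldP (P) : CompCong (.proc (.mu P)) (.proc (Proc.substH (.mu P) P))
  | unfoldS (S) : CompCong (.sensor (.mu S)) (.sensor (Sensor.substH (.mu S) S))
  | unfoldA (A) : CompCong (.actuator (.mu A)) (.actuator (Actuator.substH (.mu A) A))
  | out_empty (ws) : CompCong (.proc (.outv ws ∅)) (.proc .nil)

inductive SysCong : Sys → Sys → Prop
  | refl (N) : SysCong N N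
  | symm {N₁ N₂} : SysCong N₁ N₂ → SysCong N₂ N₁
  | trans {N₁ N₂ N₃} : SysCong N₁ N₂ → SysCong N₂ N₃ → SysCong N₁ N₃
  | par_congr {N₁ N₁' N₂ N₂'} : SysCong N₁ N₁' → SysCong N₂ N₂' →
      SysCong (.par N₁ N₂) (.par N₁' N₂')
  | par_comm (N₁ N₂) : SysCong (.par N₁ N₂) (.par N₂ N₁)
  | par_assoc (N₁ N₂ N₃) : SysCong (.par (.par N₁ N₂) N₃) (.par N₁ (.par N₂ N₃))
  | par_nil (N) : SysCong (.par N .nil) N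
  | node_congr (ℓ) {B B'} : CompCong B B' → SysCong (.node ℓ B) (.node ℓ B')

/-! ### Reduction semantics (instrumented) -/

/-- Labels of component-level reductions. -/
inductive CLbl : Type
  | tau  : CLbl
  | acom : ActuatorId → Act → CLbl   -- an application of rule (A-com)

/-- Labels of system-level reductions. -/
inductive SLbl : Type
  | tau  : SLbl
  | comm : Label → Label → List IVal → SLbl  -- message sent by ℓ₁ received by ℓ₂
  | acom : Label → ActuatorId → Act → SLbl

def CLbl.toS : CLbl → Label → SLbl
  | .tau, _ => .tau
  | .acom j γ, ℓ => .acom ℓ j γ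

inductive CompRed (cls : AVal → Bool) (d : ℕ) (ℓ : Label) : Comp → CLbl → Comp → Prop
  | sstore (σ : Store) (i v S) :   -- (S-store)
      CompRed cls d ℓ (.par (.store σ) (.sensor (.store i v S))) .tau
        (.par (.store (updStore σ (Sum.inr i) (.base v, .sensor i ℓ))) (.sensor S))
  | asgm {σ E w} (x P) :           -- (Asgm)
      evalE cls d ℓ σ E = some w →
      CompRed cls d ℓ (.par (.store σ) (.proc (.assign x E P))) .tau
        (.par (.store (updStore σ (Sum.inl x) w)) (.proc P))
  | evout {σ es ws} (L P) :        -- (Ev-out)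
      evalList cls d ℓ σ es = some ws →
      CompRed cls d ℓ (.par (.store σ) (.proc (.outp es L P))) .tau
        (.par (.store σ) (.par (.proc (.outv ws L)) (.proc P)))
  | decr {σ E cs as k₀ ws ℓ'} (Es xs P) :  -- (Decr)
      evalE cls d ℓ σ E = some (.enc cs k₀, .enc as k₀ ℓ') →
      cs.length = as.length →
      evalList cls d ℓ σ Es = some ws →
      (cs.zip as).take Es.length = ws →
      Es.length + xs.length = cs.length →
      CompRed cls d ℓ (.par (.store σ) (.proc (.dec E Es xs k₀ P))) .tau
        (.par (.store (updVars σ xs ((cs.zip as).drop Es.length))) (.proc P))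
  | cond_t {σ E w} (P₁ P₂) :       -- (Cond1)
      evalE cls d ℓ σ E = some w → w.1 = .base 1 →
      CompRed cls d ℓ (.par (.store σ) (.proc (.cond E P₁ P₂))) .tau
        (.par (.store σ) (.proc P₁))
  | cond_f {σ E w} (P₁ P₂) :       -- (Cond2)
      evalE cls d ℓ σ E = some w → w.1 = .base 0 →
      CompRed cls d ℓ (.par (.store σ) (.proc (.cond E P₁ P₂))) .tau
        (.par (.store σ) (.proc P₂))
  | acom {Γ} (j γ P A) :           -- (A-com)
      γ ∈ Γ →
      CompRed cls d ℓ (.par (.proc (.act j γ P)) (.actuator (.cmd j Γ A))) (.acom j γ)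
        (.par (.proc P) (.actuator (.act γ A)))
  | actdo (γ A) :                  -- (Act)
      CompRed cls d ℓ (.actuator (.act γ A)) .tau (.actuator A)
  | intS (S) :                     -- (Int) for sensors
      CompRed cls d ℓ (.sensor (.tau S)) .tau (.sensor S)
  | intA (A) :                     -- (Int) for actuators
      CompRed cls d ℓ (.actuator (.tau A)) .tau (.actuator A)
  | parB {B₁ lbl B₁'} (B₂) :       -- (ParB)
      CompRed cls d ℓ B₁ lbl B₁' →
      CompRed cls d ℓ (.par B₁ B₂) lbl (.par B₁' B₂)
  | congr {B₁ B₁' lbl B₂' B₂} :    -- (CongrB)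
      CompCong B₁ B₁' → CompRed cls d ℓ B₁' lbl B₂' → CompCong B₂' B₂ →
      CompRed cls d ℓ B₁ lbl B₂

inductive SysRed (cls : AVal → Bool) (d : ℕ) (Compat : Label → Label → Prop) :
    Sys → SLbl → Sys → Prop
  | node {B c B'} (ℓ) :            -- (Node)
      CompRed cls d ℓ B c B' →
      SysRed cls d Compat (.node ℓ B) (c.toS ℓ) (.node ℓ B')
  | multicom {ℓ₁ ℓ₂ : Label} {L : Finset Label} {ws : List IVal} {σ₂ Es xs Q B₁ B₂} :
      -- (Multi-com)
      ℓ₂ ∈ L → Compat ℓ₁ ℓ₂ →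
      evalList cls d ℓ₂ σ₂ Es = some (ws.take Es.length) →
      Es.length + xs.length = ws.length →
      SysRed cls d Compat
        (.par (.node ℓ₁ (.par (.proc (.outv ws L)) B₁))
              (.node ℓ₂ (.par (.store σ₂) (.par (.proc (.inp Es xs Q)) B₂))))
        (.comm ℓ₁ ℓ₂ ws)
        (.par (.node ℓ₁ (.par (.proc (.outv ws (L.erase ℓ₂))) B₁))
              (.node ℓ₂ (.par (.store (updVars σ₂ xs (ws.drop Es.length)))
                              (.par (.proc Q) B₂))))
  | parN {N₁ lbl N₁'} (N₂) :       -- (ParN)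
      SysRed cls d Compat N₁ lbl N₁' →
      SysRed cls d Compat (.par N₁ N₂) lbl (.par N₁' N₂)
  | congr {N₁ N₁' lbl N₂' N₂} :    -- (CongrN)
      SysCong N₁ N₁' → SysRed cls d Compat N₁' lbl N₂' → SysCong N₂' N₂ →
      SysRed cls d Compat N₁ lbl N₂

/-- The unlabelled reduction relation `→`. -/
def Red (cls : AVal → Bool) (d : ℕ) (Compat : Label → Label → Prop) (N N' : Sys) : Prop :=
  ∃ lbl, SysRed cls d Compat N lbl N'

/-! ### Control Flow Analysis -/

/-- A CFA estimate `(Σ̂, κ, Θ, α)`. -/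
structure Estimate : Type where
  sigma : Label → Addr → Set AVal                 -- abstract stores Σ̂_ℓ
  kappa : Label → Set (Label × List AVal)         -- messages each node may receive
  theta : Label → Set AVal                        -- abstract values each node computes
  alpha : Label → ActuatorId → Set Act            -- actuator actions each node may trigger

/-- Analysis of terms: `(Σ̂, Θ) ⊨_ℓ E : ϑ`. -/
inductive TermA (cls : AVal → Bool) (d : ℕ) (ρ : Estimate) (ℓ : Label) :
    Expr → Set AVal → Prop
  | val {v ϑ} : AVal.val v ℓ ∈ ϑ → ϑ ⊆ ρ.theta ℓ → TermA cls d ρ ℓ (.val v) ϑ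
  | sens {i ϑ} : AVal.sensor i ℓ ∈ ϑ → ϑ ⊆ ρ.theta ℓ → TermA cls d ρ ℓ (.sens i) ϑ
  | var {x ϑ} : ρ.sigma ℓ (Sum.inl x) ⊆ ϑ → ϑ ⊆ ρ.theta ℓ → TermA cls d ρ ℓ (.var x) ϑ
  | enc {es : List Expr} {k : Key} {ϑs : List (Set AVal)} {ϑ : Set AVal} :
      es.length = ϑs.length →
      (∀ p ∈ es.zip ϑs, TermA cls d ρ ℓ p.1 p.2) →
      (∀ vs : List AVal, vs.length = ϑs.length →
        (∀ q ∈ vs.zip ϑs, q.1 ∈ q.2) → AVal.cut cls d (.enc vs k ℓ) ∈ ϑ) →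
      ϑ ⊆ ρ.theta ℓ →
      TermA cls d ρ ℓ (.enc es k) ϑ
  | fn {f : FName} {es : List Expr} {ϑs : List (Set AVal)} {ϑ : Set AVal} :
      es.length = ϑs.length →
      (∀ p ∈ es.zip ϑs, TermA cls d ρ ℓ p.1 p.2) →
      (∀ vs : List AVal, vs.length = ϑs.length →
        (∀ q ∈ vs.zip ϑs, q.1 ∈ q.2) → AVal.cut cls d (.fn f vs ℓ) ∈ ϑ) →
      ϑ ⊆ ρ.theta ℓ →
      TermA cls d ρ ℓ (.fn f es) ϑ

/-- Analysis of processes: `(Σ̂, κ, Θ, α) ⊨_ℓ P`. -/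
inductive ProcA (cls : AVal → Bool) (d : ℕ) (Compat : Label → Label → Prop)
    (ρ : Estimate) (ℓ : Label) : Proc → Prop
  | nil : ProcA cls d Compat ρ ℓ .nil
  | hvar : ProcA cls d Compat ρ ℓ .hvar
  | outp {es : List Expr} {L : Finset Label} {P} {ϑs : List (Set AVal)} :
      es.length = ϑs.length →
      (∀ p ∈ es.zip ϑs, TermA cls d ρ ℓ p.1 p.2) →
      (∀ vs : List AVal, vs.length = ϑs.length → (∀ q ∈ vs.zip ϑs, q.1 ∈ q.2) →
        ∀ ℓ' ∈ L, (ℓ, vs) ∈ ρ.kappa ℓ') →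
      ProcA cls d Compat ρ ℓ P →
      ProcA cls d Compat ρ ℓ (.outp es L P)
  | outv {ws : List IVal} {L : Finset Label} :
      (∀ ℓ' ∈ L, (ℓ, ws.map Prod.snd) ∈ ρ.kappa ℓ') →
      ProcA cls d Compat ρ ℓ (.outv ws L)
  | inp {Es : List Expr} {xs : List Var} {P} {ϑs : List (Set AVal)} :
      Es.length = ϑs.length →
      (∀ p ∈ Es.zip ϑs, TermA cls d ρ ℓ p.1 p.2) →
      (∀ m ∈ ρ.kappa ℓ, Compat m.1 ℓ → m.2.length = Es.length + xs.length →
        ∀ q ∈ xs.zip (m.2.drop Es.length), q.2 ∈ ρ.sigma ℓ (Sum.inl q.1)) →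
      ProcA cls d Compat ρ ℓ P →
      ProcA cls d Compat ρ ℓ (.inp Es xs P)
  | dec {E : Expr} {Es : List Expr} {xs : List Var} {k₀ : Key} {P}
        {ϑ : Set AVal} {ϑs : List (Set AVal)} :
      TermA cls d ρ ℓ E ϑ →
      Es.length = ϑs.length →
      (∀ p ∈ Es.zip ϑs, TermA cls d ρ ℓ p.1 p.2) →
      (∀ (vs : List AVal) (ℓ'' : Label), AVal.enc vs k₀ ℓ'' ∈ ϑ →
        vs.length = Es.length + xs.length →
        ∀ q ∈ xs.zip (vs.drop Es.length), q.2 ∈ ρ.sigma ℓ (Sum.inl q.1)) →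
      ProcA cls d Compat ρ ℓ P →
      ProcA cls d Compat ρ ℓ (.dec E Es xs k₀ P)
  | cond {E P₁ P₂} {ϑ : Set AVal} :
      TermA cls d ρ ℓ E ϑ →
      ProcA cls d Compat ρ ℓ P₁ → ProcA cls d Compat ρ ℓ P₂ →
      ProcA cls d Compat ρ ℓ (.cond E P₁ P₂)
  | assign {x E P} {ϑ : Set AVal} :
      TermA cls d ρ ℓ E ϑ → ϑ ⊆ ρ.sigma ℓ (Sum.inl x) →
      ProcA cls d Compat ρ ℓ P →
      ProcA cls d Compat ρ ℓ (.assign x E P)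
  | act {j γ P} :
      γ ∈ ρ.alpha ℓ j → ProcA cls d Compat ρ ℓ P →
      ProcA cls d Compat ρ ℓ (.act j γ P)
  | mu {P} : ProcA cls d Compat ρ ℓ P → ProcA cls d Compat ρ ℓ (.mu P)

/-- Analysis of node components: `(Σ̂, κ, Θ, α) ⊨_ℓ B`. -/
inductive CompA (cls : AVal → Bool) (d : ℕ) (Compat : Label → Label → Prop)
    (ρ : Estimate) (ℓ : Label) : Comp → Prop
  | store {σ : Store} :
      (∀ i : SensorId, AVal.sensor i ℓ ∈ ρ.sigma ℓ (Sum.inr i)) →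
      CompA cls d Compat ρ ℓ (.store σ)
  | proc {P} : ProcA cls d Compat ρ ℓ P → CompA cls d Compat ρ ℓ (.proc P)
  | sensor (S) : CompA cls d Compat ρ ℓ (.sensor S)
  | actuator (A) : CompA cls d Compat ρ ℓ (.actuator A)
  | par {B₁ B₂} : CompA cls d Compat ρ ℓ B₁ → CompA cls d Compat ρ ℓ B₂ →
      CompA cls d Compat ρ ℓ (.par B₁ B₂)

/-- Analysis of systems of nodes: `(Σ̂, κ, Θ, α) ⊨ N`. -/
inductive SysA (cls : AVal → Bool) (d : ℕ) (Compat : Label → Label → Prop)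
    (ρ : Estimate) : Sys → Prop
  | nil : SysA cls d Compat ρ .nil
  | node {ℓ B} : CompA cls d Compat ρ ℓ B → SysA cls d Compat ρ (.node ℓ B)
  | par {N₁ N₂} : SysA cls d Compat ρ N₁ → SysA cls d Compat ρ N₂ →
      SysA cls d Compat ρ (.par N₁ N₂)

/-! ### Agreement between concrete and abstract stores -/

/-- `Σ_ℓ^i ⋈ Σ̂_ℓ`. -/
def Agrees (σ : Store) (sA : Addr → Set AVal) : Prop :=
  ∀ a w, σ a = some w → w.2 ∈ sA a

/-- The store `σ` occurs in the component `B`. -/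
def Comp.hasStore : Comp → Store → Prop
  | .store σ', σ => σ' = σ
  | .par B₁ B₂, σ => B₁.hasStore σ ∨ B₂.hasStore σ
  | _, _ => False

/-- The store `σ` occurs in the system `N` within a node labelled `ℓ`. -/
def Sys.hasStore : Sys → Label → Store → Prop
  | .nil, _, _ => False
  | .node ℓ' B, ℓ, σ => ℓ' = ℓ ∧ B.hasStore σ
  | .par N₁ N₂, ℓ, σ => N₁.hasStore ℓ σ ∨ N₂.hasStore ℓ σ

/-! ### Statement 2: existence of a minimal estimate (Moore family) -/

/-- Componentwise order on estimates: pointwise set inclusion in each of the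
four components. -/
instance : LE Estimate :=
  ⟨fun ρ₁ ρ₂ =>
    (∀ ℓ a, ρ₁.sigma ℓ a ⊆ ρ₂.sigma ℓ a) ∧
    (∀ ℓ, ρ₁.kappa ℓ ⊆ ρ₂.kappa ℓ) ∧
    (∀ ℓ, ρ₁.theta ℓ ⊆ ρ₂.theta ℓ) ∧
    (∀ ℓ j, ρ₁.alpha ℓ j ⊆ ρ₂.alpha ℓ j)⟩

/-- Componentwise greatest lower bound of a set of estimates. -/
def Estimate.sInf (S : Set Estimate) : Estimate where
  sigma := fun ℓ a => ⋂ ρ ∈ S, Estimate.sigma ρ ℓ a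
  kappa := fun ℓ => ⋂ ρ ∈ S, Estimate.kappa ρ ℓ
  theta := fun ℓ => ⋂ ρ ∈ S, Estimate.theta ρ ℓ
  alpha := fun ℓ j => ⋂ ρ ∈ S, Estimate.alpha ρ ℓ j


/-! ### Auxiliary lemmas for the Moore family theorem -/

section MooreAux

variable {cls : AVal → Bool} {d : ℕ} {Compat : Label → Label → Prop}

lemma mem_zip_iff' {α β : Type*} {l₁ : List α} {l₂ : List β} {p : α × β}
    (hl : l₁.length = l₂.length) :
    p ∈ l₁.zip l₂ ↔ ∃ (i : ℕ) (h₁ : i < l₁.length) (h₂ : i < l₂.length),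
      l₁[i] = p.1 ∧ l₂[i] = p.2 := by
  constructor
  · intro hp
    obtain ⟨i, hi, he⟩ := List.mem_iff_getElem.1 hp
    have hi1 : i < l₁.length := by simp [List.length_zip] at hi; omega
    have hi2 : i < l₂.length := by simp [List.length_zip] at hi; omega
    rw [List.getElem_zip] at he
    exact ⟨i, hi1, hi2, congrArg Prod.fst he, congrArg Prod.snd he⟩
  · rintro ⟨i, h₁, h₂, e₁, e₂⟩
    refine List.mem_iff_getElem.2 ⟨i, by simp [List.length_zip]; omega, ?_⟩
    rw [List.getElem_zip]; exact Prod.ext e₁ e₂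

lemma TermA.val_inv {ρ ℓ v ϑ} (h : TermA cls d ρ ℓ (.val v) ϑ) :
    AVal.val v ℓ ∈ ϑ ∧ ϑ ⊆ ρ.theta ℓ := by cases h with | val h1 h2 => exact ⟨h1, h2⟩

lemma TermA.sens_inv {ρ ℓ i ϑ} (h : TermA cls d ρ ℓ (.sens i) ϑ) :
    AVal.sensor i ℓ ∈ ϑ ∧ ϑ ⊆ ρ.theta ℓ := by cases h with | sens h1 h2 => exact ⟨h1, h2⟩

lemma TermA.var_inv {ρ ℓ x ϑ} (h : TermA cls d ρ ℓ (.var x) ϑ) :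
    ρ.sigma ℓ (Sum.inl x) ⊆ ϑ ∧ ϑ ⊆ ρ.theta ℓ := by cases h with | var h1 h2 => exact ⟨h1, h2⟩

lemma TermA.enc_inv {ρ ℓ es k ϑ} (h : TermA cls d ρ ℓ (.enc es k) ϑ) :
    ∃ ϑs : List (Set AVal), es.length = ϑs.length ∧
      (∀ p ∈ es.zip ϑs, TermA cls d ρ ℓ p.1 p.2) ∧
      (∀ vs : List AVal, vs.length = ϑs.length →
        (∀ q ∈ vs.zip ϑs, q.1 ∈ q.2) → AVal.cut cls d (.enc vs k ℓ) ∈ ϑ) ∧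
      ϑ ⊆ ρ.theta ℓ := by
  cases h with | enc h1 h2 h3 h4 => exact ⟨_, h1, h2, h3, h4⟩

lemma TermA.fn_inv {ρ ℓ f es ϑ} (h : TermA cls d ρ ℓ (.fn f es) ϑ) :
    ∃ ϑs : List (Set AVal), es.length = ϑs.length ∧
      (∀ p ∈ es.zip ϑs, TermA cls d ρ ℓ p.1 p.2) ∧
      (∀ vs : List AVal, vs.length = ϑs.length →
        (∀ q ∈ vs.zip ϑs, q.1 ∈ q.2) → AVal.cut cls d (.fn f vs ℓ) ∈ ϑ) ∧
      ϑ ⊆ ρ.theta ℓ := by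
  cases h with | fn h1 h2 h3 h4 => exact ⟨_, h1, h2, h3, h4⟩

/-- Key lemma on terms: analyses at each estimate in `S` combine into an
analysis at the componentwise intersection `Estimate.sInf S`. -/
theorem termA_inter (S : Set Estimate) (ℓ : Label) (E : Expr)
    (ϑf : ∀ ρ, ρ ∈ S → Set AVal)
    (h : ∀ ρ (hρ : ρ ∈ S), TermA cls d ρ ℓ E (ϑf ρ hρ)) :
    TermA cls d (Estimate.sInf S) ℓ E (⋂ ρ, ⋂ (hρ : ρ ∈ S), ϑf ρ hρ) := by
  have thetaSub : (∀ ρ (hρ : ρ ∈ S), ϑf ρ hρ ⊆ ρ.theta ℓ) →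
      (⋂ ρ, ⋂ (hρ : ρ ∈ S), ϑf ρ hρ) ⊆ (Estimate.sInf S).theta ℓ := by
    intro hs x hx
    simp only [Set.mem_iInter] at hx
    simp only [Estimate.sInf, Set.mem_iInter]
    exact fun ρ hρ => hs ρ hρ (hx ρ hρ)
  match E with
  | .val v =>
    refine TermA.val ?_ (thetaSub fun ρ hρ => (h ρ hρ).val_inv.2)
    simp only [Set.mem_iInter]
    exact fun ρ hρ => (h ρ hρ).val_inv.1
  | .sens i =>
    refine TermA.sens ?_ (thetaSub fun ρ hρ => (h ρ hρ).sens_inv.2)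
    simp only [Set.mem_iInter]
    exact fun ρ hρ => (h ρ hρ).sens_inv.1
  | .var x =>
    refine TermA.var ?_ (thetaSub fun ρ hρ => (h ρ hρ).var_inv.2)
    intro y hy
    simp only [Estimate.sInf, Set.mem_iInter] at hy
    simp only [Set.mem_iInter]
    exact fun ρ hρ => (h ρ hρ).var_inv.1 (hy ρ hρ)
  | .enc es k =>
    choose F hlen hsub hcut hθ using fun ρ hρ => TermA.enc_inv (h ρ hρ)
    refine TermA.enc (ϑs := List.ofFn fun i : Fin es.length =>
        ⋂ ρ, ⋂ (hρ : ρ ∈ S), (F ρ hρ).getD i ∅) (by simp) ?_ ?_ (thetaSub hθ)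
    · intro p hp
      rw [mem_zip_iff' (by simp)] at hp
      obtain ⟨i, h₁, h₂, e₁, e₂⟩ := hp
      have e₂' : p.2 = ⋂ ρ, ⋂ (hρ : ρ ∈ S), (F ρ hρ).getD i ∅ := by
        rw [← e₂]; simp
      rw [← e₁, e₂']
      refine termA_inter S ℓ es[i] _ (fun ρ hρ => ?_)
      have hlen' : i < (F ρ hρ).length := by rw [← hlen ρ hρ]; exact h₁
      have := hsub ρ hρ (es[i], (F ρ hρ).getD i ∅) ?_
      · exact this
      · rw [mem_zip_iff' (hlen ρ hρ)]
        exact ⟨i, h₁, hlen', rfl, (List.getD_eq_getElem _ _ hlen').symm⟩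
    · intro vs hvl hvm
      simp only [List.length_ofFn] at hvl
      simp only [Set.mem_iInter]
      intro ρ hρ
      refine hcut ρ hρ vs (by rw [hvl, hlen ρ hρ]) ?_
      intro q hq
      rw [mem_zip_iff' (by rw [hvl, hlen ρ hρ])] at hq
      obtain ⟨i, h₁, h₂, e₁, e₂⟩ := hq
      have h₃ : i < es.length := by omega
      have hmem := hvm (vs[i], ⋂ ρ', ⋂ (hρ' : ρ' ∈ S), (F ρ' hρ').getD i ∅) ?_
      · rw [← e₁, ← e₂]
        have := Set.mem_iInter.1 hmem ρ
        have := Set.mem_iInter.1 this hρ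
        rwa [List.getD_eq_getElem _ _ h₂] at this
      · rw [mem_zip_iff' (by simp [hvl])]
        exact ⟨i, h₁, by simp; omega, rfl, by simp⟩
  | .fn f es =>
    choose F hlen hsub hcut hθ using fun ρ hρ => TermA.fn_inv (h ρ hρ)
    refine TermA.fn (ϑs := List.ofFn fun i : Fin es.length =>
        ⋂ ρ, ⋂ (hρ : ρ ∈ S), (F ρ hρ).getD i ∅) (by simp) ?_ ?_ (thetaSub hθ)
    · intro p hp
      rw [mem_zip_iff' (by simp)] at hp
      obtain ⟨i, h₁, h₂, e₁, e₂⟩ := hp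
      have e₂' : p.2 = ⋂ ρ, ⋂ (hρ : ρ ∈ S), (F ρ hρ).getD i ∅ := by
        rw [← e₂]; simp
      rw [← e₁, e₂']
      refine termA_inter S ℓ es[i] _ (fun ρ hρ => ?_)
      have hlen' : i < (F ρ hρ).length := by rw [← hlen ρ hρ]; exact h₁
      have := hsub ρ hρ (es[i], (F ρ hρ).getD i ∅) ?_
      · exact this
      · rw [mem_zip_iff' (hlen ρ hρ)]
        exact ⟨i, h₁, hlen', rfl, (List.getD_eq_getElem _ _ hlen').symm⟩
    · intro vs hvl hvm
      simp only [List.length_ofFn] at hvl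
      simp only [Set.mem_iInter]
      intro ρ hρ
      refine hcut ρ hρ vs (by rw [hvl, hlen ρ hρ]) ?_
      intro q hq
      rw [mem_zip_iff' (by rw [hvl, hlen ρ hρ])] at hq
      obtain ⟨i, h₁, h₂, e₁, e₂⟩ := hq
      have h₃ : i < es.length := by omega
      have hmem := hvm (vs[i], ⋂ ρ', ⋂ (hρ' : ρ' ∈ S), (F ρ' hρ').getD i ∅) ?_
      · rw [← e₁, ← e₂]
        have := Set.mem_iInter.1 hmem ρ
        have := Set.mem_iInter.1 this hρ
        rwa [List.getD_eq_getElem _ _ h₂] at this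
      · rw [mem_zip_iff' (by simp [hvl])]
        exact ⟨i, h₁, by simp; omega, rfl, by simp⟩
termination_by sizeOf E
decreasing_by
  all_goals
    have h1 : sizeOf es[i] < sizeOf es := List.sizeOf_lt_of_mem (es.getElem_mem _)
    simp only [Expr.enc.sizeOf_spec, Expr.fn.sizeOf_spec]
    omega

lemma termAs_inter (S : Set Estimate) (ℓ : Label) (es : List Expr)
    (F : ∀ ρ, ρ ∈ S → List (Set AVal))
    (hlen : ∀ ρ hρ, es.length = (F ρ hρ).length)
    (hsub : ∀ ρ hρ, ∀ p ∈ es.zip (F ρ hρ), TermA cls d ρ ℓ p.1 p.2) :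
    es.length = (List.ofFn fun i : Fin es.length =>
        ⋂ ρ, ⋂ (hρ : ρ ∈ S), (F ρ hρ).getD i ∅).length ∧
    (∀ p ∈ es.zip (List.ofFn fun i : Fin es.length =>
        ⋂ ρ, ⋂ (hρ : ρ ∈ S), (F ρ hρ).getD i ∅),
        TermA cls d (Estimate.sInf S) ℓ p.1 p.2) ∧
    (∀ vs : List AVal, vs.length = (List.ofFn fun i : Fin es.length =>
          ⋂ ρ, ⋂ (hρ : ρ ∈ S), (F ρ hρ).getD i ∅).length →
      (∀ q ∈ vs.zip (List.ofFn fun i : Fin es.length =>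
          ⋂ ρ, ⋂ (hρ : ρ ∈ S), (F ρ hρ).getD i ∅), q.1 ∈ q.2) →
      ∀ ρ (hρ : ρ ∈ S), vs.length = (F ρ hρ).length ∧
        ∀ q ∈ vs.zip (F ρ hρ), q.1 ∈ q.2) := by
  refine ⟨by simp, ?_, ?_⟩
  · intro p hp
    rw [mem_zip_iff' (by simp)] at hp
    obtain ⟨i, h₁, h₂, e₁, e₂⟩ := hp
    have e₂' : p.2 = ⋂ ρ, ⋂ (hρ : ρ ∈ S), (F ρ hρ).getD i ∅ := by rw [← e₂]; simp
    rw [← e₁, e₂']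
    refine termA_inter S ℓ es[i] _ (fun ρ hρ => ?_)
    have hlen' : i < (F ρ hρ).length := by rw [← hlen ρ hρ]; exact h₁
    refine hsub ρ hρ (es[i], (F ρ hρ).getD i ∅) ?_
    rw [mem_zip_iff' (hlen ρ hρ)]
    exact ⟨i, h₁, hlen', rfl, (List.getD_eq_getElem _ _ hlen').symm⟩
  · intro vs hvl hvm ρ hρ
    simp only [List.length_ofFn] at hvl
    refine ⟨by rw [hvl, hlen ρ hρ], ?_⟩
    intro q hq
    rw [mem_zip_iff' (by rw [hvl, hlen ρ hρ])] at hq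
    obtain ⟨i, h₁, h₂, e₁, e₂⟩ := hq
    have hmem := hvm (vs[i], ⋂ ρ', ⋂ (hρ' : ρ' ∈ S), (F ρ' hρ').getD i ∅) ?_
    · rw [← e₁, ← e₂]
      have := Set.mem_iInter.1 (Set.mem_iInter.1 hmem ρ) hρ
      rwa [List.getD_eq_getElem _ _ h₂] at this
    · rw [mem_zip_iff' (by simp [hvl])]
      exact ⟨i, h₁, by simp; omega, rfl, by simp⟩

lemma ProcA.outp_inv {ρ ℓ es L P} (h : ProcA cls d Compat ρ ℓ (.outp es L P)) :
    ∃ ϑs : List (Set AVal), es.length = ϑs.length ∧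
      (∀ p ∈ es.zip ϑs, TermA cls d ρ ℓ p.1 p.2) ∧
      (∀ vs : List AVal, vs.length = ϑs.length → (∀ q ∈ vs.zip ϑs, q.1 ∈ q.2) →
        ∀ ℓ' ∈ L, (ℓ, vs) ∈ ρ.kappa ℓ') ∧
      ProcA cls d Compat ρ ℓ P := by
  cases h with | outp h1 h2 h3 h4 => exact ⟨_, h1, h2, h3, h4⟩

lemma ProcA.outv_inv {ρ ℓ ws L} (h : ProcA cls d Compat ρ ℓ (.outv ws L)) :
    ∀ ℓ' ∈ L, (ℓ, ws.map Prod.snd) ∈ ρ.kappa ℓ' := by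
  cases h with | outv h1 => exact h1

lemma ProcA.inp_inv {ρ ℓ Es xs P} (h : ProcA cls d Compat ρ ℓ (.inp Es xs P)) :
    ∃ ϑs : List (Set AVal), Es.length = ϑs.length ∧
      (∀ p ∈ Es.zip ϑs, TermA cls d ρ ℓ p.1 p.2) ∧
      (∀ m ∈ ρ.kappa ℓ, Compat m.1 ℓ → m.2.length = Es.length + xs.length →
        ∀ q ∈ xs.zip (m.2.drop Es.length), q.2 ∈ ρ.sigma ℓ (Sum.inl q.1)) ∧
      ProcA cls d Compat ρ ℓ P := by
  cases h with | inp h1 h2 h3 h4 => exact ⟨_, h1, h2, h3, h4⟩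

lemma ProcA.dec_inv {ρ ℓ E Es xs k₀ P} (h : ProcA cls d Compat ρ ℓ (.dec E Es xs k₀ P)) :
    ∃ (ϑ : Set AVal) (ϑs : List (Set AVal)), TermA cls d ρ ℓ E ϑ ∧
      Es.length = ϑs.length ∧
      (∀ p ∈ Es.zip ϑs, TermA cls d ρ ℓ p.1 p.2) ∧
      (∀ (vs : List AVal) (ℓ'' : Label), AVal.enc vs k₀ ℓ'' ∈ ϑ →
        vs.length = Es.length + xs.length →
        ∀ q ∈ xs.zip (vs.drop Es.length), q.2 ∈ ρ.sigma ℓ (Sum.inl q.1)) ∧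
      ProcA cls d Compat ρ ℓ P := by
  cases h with | dec h0 h1 h2 h3 h4 => exact ⟨_, _, h0, h1, h2, h3, h4⟩

lemma ProcA.cond_inv {ρ ℓ E P₁ P₂} (h : ProcA cls d Compat ρ ℓ (.cond E P₁ P₂)) :
    ∃ ϑ : Set AVal, TermA cls d ρ ℓ E ϑ ∧ ProcA cls d Compat ρ ℓ P₁ ∧
      ProcA cls d Compat ρ ℓ P₂ := by
  cases h with | cond h0 h1 h2 => exact ⟨_, h0, h1, h2⟩

lemma ProcA.assign_inv {ρ ℓ x E P} (h : ProcA cls d Compat ρ ℓ (.assign x E P)) :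
    ∃ ϑ : Set AVal, TermA cls d ρ ℓ E ϑ ∧ ϑ ⊆ ρ.sigma ℓ (Sum.inl x) ∧
      ProcA cls d Compat ρ ℓ P := by
  cases h with | assign h0 h1 h2 => exact ⟨_, h0, h1, h2⟩

lemma ProcA.act_inv {ρ ℓ j γ P} (h : ProcA cls d Compat ρ ℓ (.act j γ P)) :
    γ ∈ ρ.alpha ℓ j ∧ ProcA cls d Compat ρ ℓ P := by
  cases h with | act h0 h1 => exact ⟨h0, h1⟩

lemma ProcA.mu_inv {ρ ℓ P} (h : ProcA cls d Compat ρ ℓ (.mu P)) :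
    ProcA cls d Compat ρ ℓ P := by
  cases h with | mu h0 => exact h0

theorem procA_inter (S : Set Estimate) (ℓ : Label) (P : Proc)
    (h : ∀ ρ ∈ S, ProcA cls d Compat ρ ℓ P) :
    ProcA cls d Compat (Estimate.sInf S) ℓ P := by
  induction P with
  | nil => exact .nil
  | hvar => exact .hvar
  | outp es L P ih =>
    choose F hlen hsub hkap hP using fun ρ hρ => ProcA.outp_inv (h ρ hρ)
    obtain ⟨l1, l2, l3⟩ := termAs_inter (cls := cls) (d := d) S ℓ es F hlen hsub
    refine ProcA.outp l1 l2 ?_ (ih hP)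
    intro vs hvl hvmem ℓ' hℓ'
    simp only [Estimate.sInf, Set.mem_iInter]
    intro ρ hρ
    obtain ⟨a, b⟩ := l3 vs hvl hvmem ρ hρ
    exact hkap ρ hρ vs a b ℓ' hℓ'
  | outv ws L =>
    refine ProcA.outv ?_
    intro ℓ' hℓ'
    simp only [Estimate.sInf, Set.mem_iInter]
    exact fun ρ hρ => ProcA.outv_inv (h ρ hρ) ℓ' hℓ'
  | inp Es xs P ih =>
    choose F hlen hsub hkap hP using fun ρ hρ => ProcA.inp_inv (h ρ hρ)
    obtain ⟨l1, l2, _⟩ := termAs_inter (cls := cls) (d := d) S ℓ Es F hlen hsub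
    refine ProcA.inp l1 l2 ?_ (ih hP)
    intro m hm hc hlm q hq
    simp only [Estimate.sInf, Set.mem_iInter] at hm ⊢
    exact fun ρ hρ => hkap ρ hρ m (hm ρ hρ) hc hlm q hq
  | dec E Es xs k₀ P ih =>
    choose ϑ F hE hlen hsub hdec hP using fun ρ hρ => ProcA.dec_inv (h ρ hρ)
    obtain ⟨l1, l2, _⟩ := termAs_inter (cls := cls) (d := d) S ℓ Es F hlen hsub
    refine ProcA.dec (termA_inter S ℓ E ϑ hE) l1 l2 ?_ (ih hP)
    intro vs ℓ'' hvs hlv q hq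
    simp only [Set.mem_iInter] at hvs
    simp only [Estimate.sInf, Set.mem_iInter]
    exact fun ρ hρ => hdec ρ hρ vs ℓ'' (hvs ρ hρ) hlv q hq
  | cond E P₁ P₂ ih₁ ih₂ =>
    choose ϑ hE h1 h2 using fun ρ hρ => ProcA.cond_inv (h ρ hρ)
    exact ProcA.cond (termA_inter S ℓ E ϑ hE) (ih₁ h1) (ih₂ h2)
  | assign x E P ih =>
    choose ϑ hE hσ hP using fun ρ hρ => ProcA.assign_inv (h ρ hρ)
    refine ProcA.assign (termA_inter S ℓ E ϑ hE) ?_ (ih hP)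
    intro y hy
    simp only [Set.mem_iInter] at hy
    simp only [Estimate.sInf, Set.mem_iInter]
    exact fun ρ hρ => hσ ρ hρ (hy ρ hρ)
  | act j γ P ih =>
    refine ProcA.act ?_ (ih fun ρ hρ => (ProcA.act_inv (h ρ hρ)).2)
    simp only [Estimate.sInf, Set.mem_iInter]
    exact fun ρ hρ => (ProcA.act_inv (h ρ hρ)).1
  | mu P ih => exact ProcA.mu (ih fun ρ hρ => ProcA.mu_inv (h ρ hρ))

lemma CompA.store_inv {ρ ℓ σ} (h : CompA cls d Compat ρ ℓ (.store σ)) :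
    ∀ i : SensorId, AVal.sensor i ℓ ∈ ρ.sigma ℓ (Sum.inr i) := by
  cases h with | store h1 => exact h1

lemma CompA.proc_inv {ρ ℓ P} (h : CompA cls d Compat ρ ℓ (.proc P)) :
    ProcA cls d Compat ρ ℓ P := by
  cases h with | proc h1 => exact h1

lemma CompA.par_inv {ρ ℓ B₁ B₂} (h : CompA cls d Compat ρ ℓ (.par B₁ B₂)) :
    CompA cls d Compat ρ ℓ B₁ ∧ CompA cls d Compat ρ ℓ B₂ := by
  cases h with | par h1 h2 => exact ⟨h1, h2⟩

theorem compA_inter (S : Set Estimate) (ℓ : Label) (B : Comp)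
    (h : ∀ ρ ∈ S, CompA cls d Compat ρ ℓ B) :
    CompA cls d Compat (Estimate.sInf S) ℓ B := by
  induction B with
  | store σ =>
    refine CompA.store fun i => ?_
    simp only [Estimate.sInf, Set.mem_iInter]
    exact fun ρ hρ => CompA.store_inv (h ρ hρ) i
  | proc P => exact CompA.proc (procA_inter S ℓ P fun ρ hρ => CompA.proc_inv (h ρ hρ))
  | sensor S' => exact CompA.sensor S'
  | actuator A => exact CompA.actuator A
  | par B₁ B₂ ih₁ ih₂ =>
    exact CompA.par (ih₁ fun ρ hρ => (CompA.par_inv (h ρ hρ)).1)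
      (ih₂ fun ρ hρ => (CompA.par_inv (h ρ hρ)).2)

lemma SysA.node_inv {ρ ℓ B} (h : SysA cls d Compat ρ (.node ℓ B)) :
    CompA cls d Compat ρ ℓ B := by
  cases h with | node h1 => exact h1

lemma SysA.par_inv {ρ N₁ N₂} (h : SysA cls d Compat ρ (.par N₁ N₂)) :
    SysA cls d Compat ρ N₁ ∧ SysA cls d Compat ρ N₂ := by
  cases h with | par h1 h2 => exact ⟨h1, h2⟩

theorem sysA_inter (S : Set Estimate) (N : Sys)
    (h : ∀ ρ ∈ S, SysA cls d Compat ρ N) :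
    SysA cls d Compat (Estimate.sInf S) N := by
  induction N with
  | nil => exact .nil
  | node ℓ B => exact SysA.node (compA_inter S ℓ B fun ρ hρ => SysA.node_inv (h ρ hρ))
  | par N₁ N₂ ih₁ ih₂ =>
    exact SysA.par (ih₁ fun ρ hρ => (SysA.par_inv (h ρ hρ)).1)
      (ih₂ fun ρ hρ => (SysA.par_inv (h ρ hρ)).2)

end MooreAux

/-- The set of valid CFA estimates for a system of nodes `N`, ordered
componentwise by set inclusion, is a **Moore family**: it is closed under
greatest lower bounds of arbitrary subsets. Consequently, there exists a
least (minimal) valid estimate for `N`. -/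
theorem estimates_moore_family (cls : AVal → Bool) (d : ℕ)
    (Compat : Label → Label → Prop) (N : Sys) :
    (∀ S : Set Estimate, (∀ ρ ∈ S, SysA cls d Compat ρ N) →
        SysA cls d Compat (Estimate.sInf S) N) ∧
    (Estimate.sInf {ρ | SysA cls d Compat ρ N} ∈ {ρ | SysA cls d Compat ρ N} ∧
      ∀ ρ ∈ {ρ | SysA cls d Compat ρ N},
        Estimate.sInf {ρ | SysA cls d Compat ρ N} ≤ ρ) := by
  have main : ∀ S : Set Estimate, (∀ ρ ∈ S, SysA cls d Compat ρ N) →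
      SysA cls d Compat (Estimate.sInf S) N := fun S hS => sysA_inter S N hS
  refine ⟨main, main _ (fun ρ hρ => hρ), ?_⟩
  intro ρ hρ
  refine ⟨fun ℓ a x hx => ?_, fun ℓ x hx => ?_, fun ℓ x hx => ?_, fun ℓ j x hx => ?_⟩
  all_goals
    simp only [Estimate.sInf, Set.mem_iInter] at hx
    exact hx ρ hρ

end IoTLySa
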